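/- Let w be any one of the four Chebyshev weights and 0<m<n integers. Then for every algebraic polynomial P of degree at most n−m: V_n^m P(x) = P(x) for all x∈[−1,1], i.e. the VP operator reproduces all polynomials of degree at most n−m. -/

import Mathlib

/-
The polynomials `pⱼ` are discretely orthonormal on the nodes: `∑ₖ λₖ pᵢ(xₖ) pⱼ(xₖ) = δᵢⱼ`
whenever `i + j < 2n`. In the angle `t = arccos x` each product `λₖ pᵢ(xₖ) pⱼ(xₖ)` is a
combination of `cos ((j - i) tₖ)` and `cos ((i + j + c) tₖ)` with `c ∈ {0, 1, 2}`, and the node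
sums `∑ₖ cos (a tₖ)` are telescoping Dirichlet sums with a closed form. Hence
`V_n^m pᵢ = μᵢ pᵢ = pᵢ` for `i ≤ n - m`; since `p₀, …, p_{n-m}` span the polynomials of degree
`≤ n - m` and `V_n^m` is linear, it reproduces all of them.
-/

open Real Set Finset Polynomial

noncomputable section

/-- The four kinds of Chebyshev weights. -/
inductive ChebKind | one | two | three | four

/-- The Chebyshev weight function of each kind. -/
noncomputable def wFn : ChebKind → ℝ → ℝ
  | .one,   x => 1 / Real.sqrt (1 - x ^ 2)
  | .two,   x => Real.sqrt (1 - x ^ 2)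
  | .three, x => Real.sqrt ((1 + x) / (1 - x))
  | .four,  x => Real.sqrt ((1 - x) / (1 + x))

/-- The orthonormal polynomials associated with each Chebyshev weight
(`p_j(w,·)`), expressed via Mathlib's Chebyshev polynomials of the first and
second kind.  On `[-1,1]` these coincide with the usual trigonometric forms. -/
noncomputable def pPoly : ChebKind → ℕ → Polynomial ℝ
  | .one, 0       => Polynomial.C (1 / Real.sqrt π)
  | .one, (j + 1) => Polynomial.C (Real.sqrt (2 / π)) * Polynomial.Chebyshev.T ℝ ((j : ℤ) + 1)
  | .two, j       => Polynomial.C (Real.sqrt (2 / π)) * Polynomial.Chebyshev.U ℝ (j : ℤ)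
  | .three, j     => Polynomial.C (1 / Real.sqrt π) *
      (Polynomial.Chebyshev.U ℝ (j : ℤ) - Polynomial.Chebyshev.U ℝ ((j : ℤ) - 1))
  | .four, j      => Polynomial.C (1 / Real.sqrt π) *
      (Polynomial.Chebyshev.U ℝ (j : ℤ) + Polynomial.Chebyshev.U ℝ ((j : ℤ) - 1))

noncomputable def pEval (w : ChebKind) (j : ℕ) (x : ℝ) : ℝ := (pPoly w j).eval x

/-- Angular Chebyshev nodes `t_k^n`. -/
noncomputable def tNode : ChebKind → ℕ → ℕ → ℝ
  | .one,   n, k => (2 * (k : ℝ) - 1) * π / (2 * n)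
  | .two,   n, k => (k : ℝ) * π / (n + 1)
  | .three, n, k => (2 * (k : ℝ) - 1) * π / (2 * n + 1)
  | .four,  n, k => 2 * (k : ℝ) * π / (2 * n + 1)

/-- Chebyshev nodes `x_k^n = cos t_k^n`, zeros of `p_n(w,·)`. -/
noncomputable def xNode (w : ChebKind) (n k : ℕ) : ℝ := Real.cos (tNode w n k)

/-- Christoffel numbers `λ_k^n`. -/
noncomputable def lam : ChebKind → ℕ → ℕ → ℝ
  | .one,   n, _ => π / n
  | .two,   n, k => π / (n + 1) * Real.sin (tNode .two n k) ^ 2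
  | .three, n, k => 4 * π / (2 * n + 1) * Real.cos (tNode .three n k / 2) ^ 2
  | .four,  n, k => 4 * π / (2 * n + 1) * Real.sin (tNode .four n k / 2) ^ 2

/-- de la Vallée Poussin filter coefficients `μ_{n,j}^m`. -/
noncomputable def mufilt (n m j : ℕ) : ℝ :=
  if j ≤ n - m then 1 else ((n : ℝ) + m - j) / (2 * m)

/-- Fundamental VP polynomials `Φ_{n,k}^m(w;x)`. -/
noncomputable def Phi (w : ChebKind) (n m k : ℕ) (x : ℝ) : ℝ :=
  lam w n k * ∑ j ∈ Finset.range (n + m), mufilt n m j * pEval w j (xNode w n k) * pEval w j x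

/-- The VP interpolation polynomial `V_n^m f`. -/
noncomputable def VP (w : ChebKind) (n m : ℕ) (f : ℝ → ℝ) (x : ℝ) : ℝ :=
  ∑ k ∈ Finset.Icc 1 n, f (xNode w n k) * Phi w n m k x

/-- Jacobi weight `u(x) = (1-x)^γ (1+x)^δ`. -/
noncomputable def jac (γ δ : ℝ) (x : ℝ) : ℝ := (1 - x) ^ γ * (1 + x) ^ δ

/-- Weighted uniform norm `‖f·u‖ = max_{|x|≤1} |f(x) u(x)|`. -/
noncomputable def wnorm (γ δ : ℝ) (f : ℝ → ℝ) : ℝ :=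
  sSup ((fun x => |f x * jac γ δ x|) '' Set.Icc (-1 : ℝ) 1)

/-- Error of best weighted polynomial approximation `E_n(f)_u`. -/
noncomputable def bestE (γ δ : ℝ) (n : ℕ) (f : ℝ → ℝ) : ℝ :=
  sInf ((fun P : Polynomial ℝ => wnorm γ δ (fun x => f x - P.eval x)) ''
    {P : Polynomial ℝ | P.natDegree ≤ n})

/-- Membership in the space `C^0_u`: `f` is continuous on compact subsets of
`(-1,1)`, `f·u` extends continuously to `[-1,1]`, with value (= limit) `0` at
`±1` when the corresponding exponent is positive. -/
def MemC0 (γ δ : ℝ) (f : ℝ → ℝ) : Prop :=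
  ContinuousOn f (Set.Ioo (-1 : ℝ) 1) ∧
  ContinuousOn (fun x => f x * jac γ δ x) (Set.Icc (-1 : ℝ) 1) ∧
  (0 < γ → f 1 * jac γ δ 1 = 0) ∧ (0 < δ → f (-1) * jac γ δ (-1) = 0)

/-- Conditions (hp-u) on the exponents of `u=(1-x)^γ(1+x)^δ` relative to `w`. -/
def hpu : ChebKind → ℝ → ℝ → Prop
  | .one,   γ, δ => 0 ≤ γ ∧ γ ≤ 1 ∧ 0 ≤ δ ∧ δ ≤ 1
  | .two,   γ, δ => 0 < γ ∧ γ ≤ 3 / 2 ∧ 0 < δ ∧ δ ≤ 3 / 2 ∧ -1 ≤ γ - δ ∧ γ - δ ≤ 1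
  | .three, γ, δ => 0 ≤ γ ∧ γ ≤ 1 ∧ 0 < δ ∧ δ ≤ 3 / 2 ∧ γ - δ ≤ 1 / 2
  | .four,  γ, δ => 0 < γ ∧ γ ≤ 3 / 2 ∧ 0 ≤ δ ∧ δ ≤ 1 ∧ -(1 / 2) ≤ γ - δ

/-- `φ(x) = sqrt(1-x²)`. -/
noncomputable def phi (x : ℝ) : ℝ := Real.sqrt (1 - x ^ 2)

/-- The set of values `|f^{(r)}(x)| φ(x)^r u(x)`, `x ∈ (-1,1)`. -/
noncomputable def derSet (γ δ : ℝ) (r : ℕ) (f : ℝ → ℝ) : Set ℝ :=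
  (fun x : ℝ => |iteratedDerivWithin r f (Set.Ioo (-1 : ℝ) 1) x| * phi x ^ r * jac γ δ x) ''
    Set.Ioo (-1 : ℝ) 1

/-- Membership in the Sobolev-type space `W_r(u)`. -/
def MemW (γ δ : ℝ) (r : ℕ) (f : ℝ → ℝ) : Prop :=
  MemC0 γ δ f ∧ ContDiffOn ℝ r f (Set.Ioo (-1 : ℝ) 1) ∧ BddAbove (derSet γ δ r f)

/-- The norm of `W_r(u)`: `‖fu‖ + ‖f^{(r)} φ^r u‖`. -/
noncomputable def Wnorm (γ δ : ℝ) (r : ℕ) (f : ℝ → ℝ) : ℝ :=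
  wnorm γ δ f + sSup (derSet γ δ r f)

/-- The set of values `(n+1)^r E_n(f)_u`, `n ≥ 1`. -/
noncomputable def zSet (γ δ r : ℝ) (f : ℝ → ℝ) : Set ℝ :=
  (fun n : ℕ => ((n : ℝ) + 1) ^ r * bestE γ δ n f) '' {n : ℕ | 1 ≤ n}

/-- Membership in the Hölder–Zygmund space `Z_r(u)`. -/
def MemZ (γ δ r : ℝ) (f : ℝ → ℝ) : Prop := MemC0 γ δ f ∧ BddAbove (zSet γ δ r f)

/-- The norm of `Z_r(u)`: `‖fu‖ + sup_{n≥1} (n+1)^r E_n(f)_u`. -/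
noncomputable def Znorm (γ δ r : ℝ) (f : ℝ → ℝ) : ℝ :=
  wnorm γ δ f + sSup (zSet γ δ r f)

/-- Exponents `(γ,δ)` of the weight `u = sqrt(w·φ)`. -/
def uExp : ChebKind → ℝ × ℝ
  | .one => (0, 0) | .two => (1 / 2, 1 / 2) | .three => (0, 1 / 2) | .four => (1 / 2, 0)

/-- The constant `C_w`. -/
def Cw : ChebKind → ℝ | .one => 2 | _ => 1

/-- The quantity `n_w`. -/
noncomputable def nw : ChebKind → ℕ → ℝ
  | .one, n => n | .two, n => n + 1
  | .three, n => (2 * (n : ℝ) + 1) / 2 | .four, n => (2 * (n : ℝ) + 1) / 2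

/-- The quantity `m_w`. -/
noncomputable def mw : ChebKind → ℕ → ℕ → ℝ
  | .one, n, m => (n : ℝ) + m | .two, n, m => (n : ℝ) + m
  | .three, n, m => 2 * ((n : ℝ) + m) - 1 | .four, n, m => 2 * ((n : ℝ) + m) - 1

/-- The polynomials `q_{n,j}^m(w,·)` (orthogonal VP basis). -/
noncomputable def qq (w : ChebKind) (n m j : ℕ) (x : ℝ) : ℝ :=
  if j ≤ n - m then pEval w j x
  else ((m : ℝ) + n - j) / (2 * m) * pEval w j x
    - ((m : ℝ) + j - n) / (2 * m) * pEval w (2 * n - j) x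

end

theorem two_mul_sin_mul_sum_cos_odd_mul (θ : ℝ) (n : ℕ) :
    2 * sin θ * ∑ k ∈ Icc 1 n, cos ((2 * k - 1) * θ) = sin (2 * n * θ) := by
  induction n with
  | zero => simp
  | succ n ih =>
    rw [sum_Icc_succ_top (by omega), mul_add, ih, two_mul_sin_mul_cos]
    push_cast
    rw [show θ - (2 * (n + 1) - 1) * θ = -(2 * n * θ) by ring, sin_neg]
    ring_nf

theorem two_mul_sin_mul_sum_cos_even_mul (θ : ℝ) (n : ℕ) :
    2 * sin θ * ∑ k ∈ Icc 1 n, cos (2 * k * θ) = sin ((2 * n + 1) * θ) - sin θ := by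
  induction n with
  | zero => simp
  | succ n ih =>
    rw [sum_Icc_succ_top (by omega), mul_add, ih, two_mul_sin_mul_cos]
    push_cast
    rw [show θ - 2 * (n + 1) * θ = -((2 * n + 1) * θ) by ring, sin_neg]
    ring_nf

theorem sum_cos_zero_mul (n : ℕ) (t : ℕ → ℝ) :
    ∑ k ∈ Icc 1 n, cos (((0 : ℕ) : ℝ) * t k) = n := by
  simp

theorem mul_pi_div_mem_Ioo {a N : ℝ} (ha : 0 < a) (haN : a < N) : a * π / N ∈ Ioo 0 π :=
  ⟨div_pos (mul_pos ha pi_pos) (ha.trans haN),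
    (div_lt_iff₀ (ha.trans haN)).2 (by nlinarith [pi_pos])⟩

theorem sin_mul_pi_div_ne_zero {a N : ℝ} (ha : 0 < a) (haN : a < N) : sin (a * π / N) ≠ 0 :=
  (sin_pos_of_mem_Ioo (mul_pi_div_mem_Ioo ha haN)).ne'

/- With `θ = a π / N` the angles `a tₖ` are the odd (kinds one and three) or even (kinds two and
four) multiples of `θ` up to `N θ - θ` or `N θ`, and `sin (N θ) = sin (a π) = 0`. -/
theorem sum_cos_mul_tNode_one {n a : ℕ} (ha : 0 < a) (han : a < 2 * n) :
    ∑ k ∈ Icc 1 n, cos (a * tNode .one n k) = 0 := by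
  have hθ := sin_mul_pi_div_ne_zero (a := a) (N := 2 * n) (by exact_mod_cast ha)
    (by exact_mod_cast han)
  have hn : (n : ℝ) ≠ 0 := by norm_cast; omega
  have key := two_mul_sin_mul_sum_cos_odd_mul (a * π / (2 * n)) n
  rw [show 2 * n * (a * π / (2 * n)) = a * π by field_simp, sin_nat_mul_pi] at key
  simp only [tNode, show ∀ k : ℕ, a * ((2 * k - 1) * π / (2 * n)) = (2 * k - 1) * (a * π / (2 * n))
    from fun k => by ring]
  exact (mul_eq_zero.1 key).resolve_left (mul_ne_zero two_ne_zero hθ)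

theorem sum_cos_mul_tNode_two {n a : ℕ} (ha : 0 < a) (han : a < 2 * n + 2) :
    ∑ k ∈ Icc 1 n, cos (a * tNode .two n k) = -(1 + (-1) ^ a) / 2 := by
  have hθ := sin_mul_pi_div_ne_zero (a := a) (N := 2 * n + 2) (by exact_mod_cast ha)
    (by exact_mod_cast han)
  have key := two_mul_sin_mul_sum_cos_even_mul (a * π / (2 * n + 2)) n
  rw [show (2 * n + 1) * (a * π / (2 * n + 2)) = a * π - a * π / (2 * n + 2) by field_simp; ring,
    sin_nat_mul_pi_sub] at key
  simp only [tNode, show ∀ k : ℕ, a * (k * π / (n + 1)) = 2 * k * (a * π / (2 * n + 2))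
    from fun k => by field_simp]
  apply mul_left_cancel₀ (mul_ne_zero two_ne_zero hθ)
  linear_combination key

theorem sum_cos_mul_tNode_three {n a : ℕ} (ha : 0 < a) (han : a ≤ 2 * n) :
    ∑ k ∈ Icc 1 n, cos (a * tNode .three n k) = -(-1) ^ a / 2 := by
  have hθ := sin_mul_pi_div_ne_zero (a := a) (N := 2 * n + 1) (by exact_mod_cast ha)
    (by norm_cast; omega)
  have key := two_mul_sin_mul_sum_cos_odd_mul (a * π / (2 * n + 1)) n
  rw [show 2 * n * (a * π / (2 * n + 1)) = a * π - a * π / (2 * n + 1) by field_simp; ring,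
    sin_nat_mul_pi_sub] at key
  simp only [tNode, show ∀ k : ℕ, a * ((2 * k - 1) * π / (2 * n + 1))
    = (2 * k - 1) * (a * π / (2 * n + 1)) from fun k => by ring]
  apply mul_left_cancel₀ (mul_ne_zero two_ne_zero hθ)
  linear_combination key

theorem sum_cos_mul_tNode_four {n a : ℕ} (ha : 0 < a) (han : a ≤ 2 * n) :
    ∑ k ∈ Icc 1 n, cos (a * tNode .four n k) = -1 / 2 := by
  have hθ := sin_mul_pi_div_ne_zero (a := a) (N := 2 * n + 1) (by exact_mod_cast ha)
    (by norm_cast; omega)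
  have key := two_mul_sin_mul_sum_cos_even_mul (a * π / (2 * n + 1)) n
  rw [show (2 * n + 1) * (a * π / (2 * n + 1)) = a * π by field_simp, sin_nat_mul_pi] at key
  simp only [tNode, show ∀ k : ℕ, a * (2 * k * π / (2 * n + 1)) = 2 * k * (a * π / (2 * n + 1))
    from fun k => by ring]
  apply mul_left_cancel₀ (mul_ne_zero two_ne_zero hθ)
  linear_combination key

theorem pEval_one_zero (x : ℝ) : pEval .one 0 x = 1 / √π := by
  simp [pEval, pPoly]

theorem pEval_one_cos {j : ℕ} (hj : j ≠ 0) (t : ℝ) :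
    pEval .one j (cos t) = √(2 / π) * cos (j * t) := by
  obtain ⟨j, rfl⟩ := Nat.exists_eq_succ_of_ne_zero hj
  simp [pEval, pPoly, Chebyshev.T_real_cos]

theorem pEval_two_cos_mul_sin (j : ℕ) (t : ℝ) :
    pEval .two j (cos t) * sin t = √(2 / π) * sin ((j + 1) * t) := by
  simp only [pEval, pPoly, eval_mul, eval_C, mul_assoc]
  exact_mod_cast congrArg (√(2 / π) * ·) (Chebyshev.U_real_cos t j)

/- Multiplied by `2 sin (t / 2)`, both sides become `sin ((j + 1) t) - sin (j t)`, by
`Uⱼ(cos t) sin t = sin ((j + 1) t)` and `sin t = 2 sin (t / 2) cos (t / 2)`; similarly for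
`pEval_four_cos_mul_sin_half` with `2 cos (t / 2)` and `sin ((j + 1) t) + sin (j t)`. -/
theorem pEval_three_cos_mul_cos_half {t : ℝ} (ht : sin (t / 2) ≠ 0) (j : ℕ) :
    pEval .three j (cos t) * cos (t / 2) = cos ((2 * j + 1) * (t / 2)) / √π := by
  have hU := Chebyshev.U_real_cos t j
  have hU' := Chebyshev.U_real_cos t (j - 1)
  have hsin : sin t = 2 * sin (t / 2) * cos (t / 2) := by rw [← sin_two_mul]; ring_nf
  have hsum := two_mul_sin_mul_cos (t / 2) ((2 * j + 1) * (t / 2))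
  rw [show t / 2 - (2 * j + 1) * (t / 2) = -(j * t) by ring, sin_neg,
    show t / 2 + (2 * j + 1) * (t / 2) = (j + 1) * t by ring] at hsum
  push_cast at hU hU'
  rw [sub_add_cancel] at hU'
  simp only [pEval, pPoly, eval_mul, eval_C, eval_sub]
  apply mul_left_cancel₀ (mul_ne_zero two_ne_zero ht)
  linear_combination (√π)⁻¹ * (hU - hU' - hsum - ((Chebyshev.U ℝ j).eval (cos t)
    - (Chebyshev.U ℝ (j - 1)).eval (cos t)) * hsin)

theorem pEval_four_cos_mul_sin_half {t : ℝ} (ht : cos (t / 2) ≠ 0) (j : ℕ) :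
    pEval .four j (cos t) * sin (t / 2) = sin ((2 * j + 1) * (t / 2)) / √π := by
  have hU := Chebyshev.U_real_cos t j
  have hU' := Chebyshev.U_real_cos t (j - 1)
  have hsin : sin t = 2 * sin (t / 2) * cos (t / 2) := by rw [← sin_two_mul]; ring_nf
  have hsum := two_mul_sin_mul_cos ((2 * j + 1) * (t / 2)) (t / 2)
  rw [show (2 * j + 1) * (t / 2) - t / 2 = j * t by ring,
    show (2 * j + 1) * (t / 2) + t / 2 = (j + 1) * t by ring] at hsum
  push_cast at hU hU'
  rw [sub_add_cancel] at hU'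
  simp only [pEval, pPoly, eval_mul, eval_C, eval_add]
  apply mul_left_cancel₀ (mul_ne_zero two_ne_zero ht)
  linear_combination (√π)⁻¹ * (hU + hU' - hsum - ((Chebyshev.U ℝ j).eval (cos t)
    + (Chebyshev.U ℝ (j - 1)).eval (cos t)) * hsin)

theorem sqrt_two_div_pi_mul_self : √(2 / π) * √(2 / π) = 2 / π :=
  mul_self_sqrt (div_nonneg zero_le_two pi_pos.le)

theorem pEval_one_cos_mul_pEval_one_cos {i j : ℕ} (hi : i ≠ 0) (hj : j ≠ 0) (t : ℝ) :
    pEval .one i (cos t) * pEval .one j (cos t) = (cos ((j - i) * t) + cos ((i + j) * t)) / π := by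
  have h := two_mul_cos_mul_cos (j * t) (i * t)
  rw [show j * t - i * t = (j - i) * t by ring, show j * t + i * t = (i + j) * t by ring] at h
  rw [pEval_one_cos hi, pEval_one_cos hj, ← h, mul_mul_mul_comm, sqrt_two_div_pi_mul_self]
  ring

theorem sin_sq_mul_pEval_two_cos_mul_pEval_two_cos (i j : ℕ) (t : ℝ) :
    sin t ^ 2 * (pEval .two i (cos t) * pEval .two j (cos t))
      = (cos ((j - i) * t) - cos ((i + j + 2) * t)) / π := by
  have h := two_mul_sin_mul_sin ((j + 1) * t) ((i + 1) * t)
  rw [show (j + 1) * t - (i + 1) * t = (j - i) * t by ring,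
    show (j + 1) * t + (i + 1) * t = (i + j + 2) * t by ring] at h
  rw [← h, show sin t ^ 2 * (pEval .two i (cos t) * pEval .two j (cos t))
      = (pEval .two i (cos t) * sin t) * (pEval .two j (cos t) * sin t) by ring,
    pEval_two_cos_mul_sin, pEval_two_cos_mul_sin, mul_mul_mul_comm, sqrt_two_div_pi_mul_self]
  ring

theorem cos_sq_half_mul_pEval_three_cos_mul_pEval_three_cos {t : ℝ} (ht : sin (t / 2) ≠ 0)
    (i j : ℕ) : cos (t / 2) ^ 2 * (pEval .three i (cos t) * pEval .three j (cos t))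
      = (cos ((j - i) * t) + cos ((i + j + 1) * t)) / (2 * π) := by
  have h := two_mul_cos_mul_cos ((2 * j + 1) * (t / 2)) ((2 * i + 1) * (t / 2))
  rw [show (2 * j + 1) * (t / 2) - (2 * i + 1) * (t / 2) = (j - i) * t by ring,
    show (2 * j + 1) * (t / 2) + (2 * i + 1) * (t / 2) = (i + j + 1) * t by ring] at h
  rw [← h, show cos (t / 2) ^ 2 * (pEval .three i (cos t) * pEval .three j (cos t))
      = (pEval .three i (cos t) * cos (t / 2)) * (pEval .three j (cos t) * cos (t / 2)) by ring,
    pEval_three_cos_mul_cos_half ht, pEval_three_cos_mul_cos_half ht]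
  field_simp
  rw [sq_sqrt pi_pos.le]
  ring

theorem sin_sq_half_mul_pEval_four_cos_mul_pEval_four_cos {t : ℝ} (ht : cos (t / 2) ≠ 0)
    (i j : ℕ) : sin (t / 2) ^ 2 * (pEval .four i (cos t) * pEval .four j (cos t))
      = (cos ((j - i) * t) - cos ((i + j + 1) * t)) / (2 * π) := by
  have h := two_mul_sin_mul_sin ((2 * j + 1) * (t / 2)) ((2 * i + 1) * (t / 2))
  rw [show (2 * j + 1) * (t / 2) - (2 * i + 1) * (t / 2) = (j - i) * t by ring,
    show (2 * j + 1) * (t / 2) + (2 * i + 1) * (t / 2) = (i + j + 1) * t by ring] at h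
  rw [← h, show sin (t / 2) ^ 2 * (pEval .four i (cos t) * pEval .four j (cos t))
      = (pEval .four i (cos t) * sin (t / 2)) * (pEval .four j (cos t) * sin (t / 2)) by ring,
    pEval_four_cos_mul_sin_half ht, pEval_four_cos_mul_sin_half ht]
  field_simp
  rw [sq_sqrt pi_pos.le]
  ring

theorem sum_lam_mul_pEval_mul_pEval_one {n i j : ℕ} (hij : i ≤ j) (h : i + j < 2 * n) :
    ∑ k ∈ Icc 1 n, lam .one n k * pEval .one i (xNode .one n k) * pEval .one j (xNode .one n k)
      = if i = j then 1 else 0 := by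
  have hn : (n : ℝ) ≠ 0 := by norm_cast; omega
  rcases Nat.eq_zero_or_pos i with rfl | hi
  · rcases Nat.eq_zero_or_pos j with rfl | hj
    · simp only [lam, pEval_one_zero, sum_const, Nat.card_Icc, add_tsub_cancel_right, nsmul_eq_mul,
        if_pos]
      field_simp
      rw [sq_sqrt pi_pos.le]
    · simp_rw [lam, xNode, pEval_one_zero, pEval_one_cos hj.ne', ← mul_assoc, ← mul_sum,
        sum_cos_mul_tNode_one (n := n) hj (by omega)]
      simp [hj.ne]
  · have hterm : ∀ k, lam .one n k * pEval .one i (xNode .one n k) * pEval .one j (xNode .one n k)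
        = (cos ((j - i : ℕ) * tNode .one n k) + cos ((i + j : ℕ) * tNode .one n k)) / n := by
      intro k
      rw [lam, xNode, mul_assoc, pEval_one_cos_mul_pEval_one_cos hi.ne' (by omega)]
      push_cast [Nat.cast_sub hij]
      field_simp
    rw [sum_congr rfl fun k _ => hterm k, ← sum_div, sum_add_distrib,
      sum_cos_mul_tNode_one (a := i + j) (by omega) h]
    split_ifs with hij'
    · subst hij'
      rw [Nat.sub_self, sum_cos_zero_mul, add_zero, div_self hn]
    · rw [sum_cos_mul_tNode_one (by omega) (by omega)]
      simp

theorem sum_lam_mul_pEval_mul_pEval_two {n i j : ℕ} (hij : i ≤ j) (h : i + j < 2 * n) :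
    ∑ k ∈ Icc 1 n, lam .two n k * pEval .two i (xNode .two n k) * pEval .two j (xNode .two n k)
      = if i = j then 1 else 0 := by
  have hterm : ∀ k, lam .two n k * pEval .two i (xNode .two n k) * pEval .two j (xNode .two n k)
      = (cos ((j - i : ℕ) * tNode .two n k) - cos ((i + j + 2 : ℕ) * tNode .two n k))
        / (n + 1) := by
    intro k
    rw [lam, xNode, mul_assoc, mul_assoc, sin_sq_mul_pEval_two_cos_mul_pEval_two_cos]
    push_cast [Nat.cast_sub hij]
    field_simp
  rw [sum_congr rfl fun k _ => hterm k, ← sum_div, sum_sub_distrib,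
    sum_cos_mul_tNode_two (a := i + j + 2) (by omega) (by omega)]
  split_ifs with hij'
  · subst hij'
    rw [Nat.sub_self, sum_cos_zero_mul, show i + i + 2 = 2 * (i + 1) by omega, pow_mul, neg_one_sq,
      one_pow, div_eq_one_iff_eq (by positivity)]
    ring
  · rw [sum_cos_mul_tNode_two (by omega) (by omega),
      show i + j + 2 = j - i + 2 * (i + 1) by omega, pow_add, pow_mul]
    norm_num

theorem tNode_three_mem_Ioo {n k : ℕ} (hk1 : 1 ≤ k) (hkn : k ≤ n) : tNode .three n k ∈ Ioo 0 π := by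
  have hk1' : (1 : ℝ) ≤ k := by exact_mod_cast hk1
  have hkn' : (k : ℝ) ≤ n := by exact_mod_cast hkn
  exact mul_pi_div_mem_Ioo (by linarith) (by linarith)

theorem tNode_four_mem_Ioo {n k : ℕ} (hk1 : 1 ≤ k) (hkn : k ≤ n) : tNode .four n k ∈ Ioo 0 π := by
  have hk1' : (1 : ℝ) ≤ k := by exact_mod_cast hk1
  have hkn' : (k : ℝ) ≤ n := by exact_mod_cast hkn
  exact mul_pi_div_mem_Ioo (by linarith) (by linarith)

theorem sum_lam_mul_pEval_mul_pEval_three {n i j : ℕ} (hij : i ≤ j) (h : i + j < 2 * n) :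
    ∑ k ∈ Icc 1 n,
        lam .three n k * pEval .three i (xNode .three n k) * pEval .three j (xNode .three n k)
      = if i = j then 1 else 0 := by
  have hterm : ∀ k ∈ Finset.Icc 1 n,
      lam .three n k * pEval .three i (xNode .three n k) * pEval .three j (xNode .three n k)
        = 2 * (cos ((j - i : ℕ) * tNode .three n k) + cos ((i + j + 1 : ℕ) * tNode .three n k))
          / (2 * n + 1) := by
    intro k hk
    have ht := tNode_three_mem_Ioo (Finset.mem_Icc.1 hk).1 (Finset.mem_Icc.1 hk).2
    have hsin : sin (tNode .three n k / 2) ≠ 0 :=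
      (sin_pos_of_pos_of_lt_pi (half_pos ht.1) (by linarith [ht.2, pi_pos])).ne'
    rw [lam, xNode, mul_assoc, mul_assoc, cos_sq_half_mul_pEval_three_cos_mul_pEval_three_cos hsin]
    push_cast [Nat.cast_sub hij]
    field_simp
    ring
  rw [sum_congr rfl hterm, ← sum_div, ← mul_sum, sum_add_distrib,
    sum_cos_mul_tNode_three (a := i + j + 1) (by omega) (by omega)]
  split_ifs with hij'
  · subst hij'
    rw [Nat.sub_self, sum_cos_zero_mul, show i + i + 1 = 2 * i + 1 by omega, pow_succ, pow_mul,
      neg_one_sq, one_pow, div_eq_one_iff_eq (by positivity)]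
    ring
  · rw [sum_cos_mul_tNode_three (by omega) (by omega),
      show i + j + 1 = j - i + 2 * i + 1 by omega, pow_succ, pow_add, pow_mul]
    ring

theorem sum_lam_mul_pEval_mul_pEval_four {n i j : ℕ} (hij : i ≤ j) (h : i + j < 2 * n) :
    ∑ k ∈ Icc 1 n,
        lam .four n k * pEval .four i (xNode .four n k) * pEval .four j (xNode .four n k)
      = if i = j then 1 else 0 := by
  have hterm : ∀ k ∈ Finset.Icc 1 n,
      lam .four n k * pEval .four i (xNode .four n k) * pEval .four j (xNode .four n k)
        = 2 * (cos ((j - i : ℕ) * tNode .four n k) - cos ((i + j + 1 : ℕ) * tNode .four n k))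
          / (2 * n + 1) := by
    intro k hk
    have ht := tNode_four_mem_Ioo (Finset.mem_Icc.1 hk).1 (Finset.mem_Icc.1 hk).2
    have hcos : cos (tNode .four n k / 2) ≠ 0 :=
      (cos_pos_of_mem_Ioo ⟨by linarith [ht.1, pi_pos], by linarith [ht.2]⟩).ne'
    rw [lam, xNode, mul_assoc, mul_assoc, sin_sq_half_mul_pEval_four_cos_mul_pEval_four_cos hcos]
    push_cast [Nat.cast_sub hij]
    field_simp
    ring
  rw [sum_congr rfl hterm, ← sum_div, ← mul_sum, sum_sub_distrib,
    sum_cos_mul_tNode_four (a := i + j + 1) (by omega) (by omega)]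
  split_ifs with hij'
  · subst hij'
    rw [Nat.sub_self, sum_cos_zero_mul, div_eq_one_iff_eq (by positivity)]
    ring
  · rw [sum_cos_mul_tNode_four (by omega) (by omega)]
    norm_num

theorem sum_lam_mul_pEval_mul_pEval (w : ChebKind) {n i j : ℕ} (h : i + j < 2 * n) :
    ∑ k ∈ Icc 1 n, lam w n k * pEval w i (xNode w n k) * pEval w j (xNode w n k)
      = if i = j then 1 else 0 := by
  wlog hij : i ≤ j generalizing i j
  · simp_rw [eq_comm (a := i), mul_right_comm _ (pEval w i _)]
    exact this (by omega) (by omega)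
  cases w
  · exact sum_lam_mul_pEval_mul_pEval_one hij h
  · exact sum_lam_mul_pEval_mul_pEval_two hij h
  · exact sum_lam_mul_pEval_mul_pEval_three hij h
  · exact sum_lam_mul_pEval_mul_pEval_four hij h

theorem degree_U_sub_one_lt (j : ℕ) :
    (Chebyshev.U ℝ ((j : ℤ) - 1)).degree < (Chebyshev.U ℝ j).degree := by
  rcases j with _ | j
  · simp
  · rw [show ((j + 1 : ℕ) : ℤ) - 1 = j by push_cast; ring, Chebyshev.degree_U_natCast,
      Chebyshev.degree_U_natCast]
    exact_mod_cast j.lt_succ_self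

theorem degree_pPoly (w : ChebKind) (j : ℕ) : (pPoly w j).degree = j := by
  cases w
  · rcases j with _ | j
    · exact degree_C (by positivity)
    · rw [pPoly, degree_C_mul (by positivity), Chebyshev.degree_T]
      norm_cast
  · rw [pPoly, degree_C_mul (by positivity), Chebyshev.degree_U_natCast]
  · rw [pPoly, degree_C_mul (by positivity),
      degree_sub_eq_left_of_degree_lt (degree_U_sub_one_lt j), Chebyshev.degree_U_natCast]
  · rw [pPoly, degree_C_mul (by positivity),
      degree_add_eq_left_of_degree_lt (degree_U_sub_one_lt j), Chebyshev.degree_U_natCast]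

noncomputable def pPolySequence (w : ChebKind) : Polynomial.Sequence ℝ := ⟨pPoly w, degree_pPoly w⟩

theorem mem_span_pPoly (w : ChebKind) {d : ℕ} {P : ℝ[X]} (hP : P.natDegree ≤ d) :
    P ∈ Submodule.span ℝ (pPoly w '' Set.Iic d) := by
  rw [show pPoly w = pPolySequence w from rfl,
    (pPolySequence w).span_degreeLE fun i _ =>
      (leadingCoeff_ne_zero.2 ((pPolySequence w).ne_zero i)).isUnit]
  exact mem_degreeLE.2 (natDegree_le_iff_degree_le.1 hP)

section VP

variable (w : ChebKind) (n m : ℕ)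

theorem VP_add (f g : ℝ → ℝ) (x : ℝ) : VP w n m (f + g) x = VP w n m f x + VP w n m g x := by
  simp only [VP, Pi.add_apply, add_mul, sum_add_distrib]

theorem VP_smul (c : ℝ) (f : ℝ → ℝ) (x : ℝ) : VP w n m (c • f) x = c * VP w n m f x := by
  simp only [VP, Pi.smul_apply, smul_eq_mul, mul_assoc, mul_sum]

variable {w n m}

theorem VP_pEval (hm : 0 < m) (hmn : m < n) {i : ℕ} (hi : i ≤ n - m) (x : ℝ) :
    VP w n m (pEval w i) x = pEval w i x := by
  have hcoeff : ∀ j ∈ range (n + m),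
      ∑ k ∈ Icc 1 n, pEval w i (xNode w n k) * (lam w n k *
          (mufilt n m j * pEval w j (xNode w n k) * pEval w j x))
        = if i = j then mufilt n m j * pEval w j x else 0 := by
    intro j hj
    calc _ = mufilt n m j * pEval w j x * ∑ k ∈ Icc 1 n,
          lam w n k * pEval w i (xNode w n k) * pEval w j (xNode w n k) := by
          rw [mul_sum]
          exact sum_congr rfl fun k _ => by ring
      _ = _ := by
        rw [sum_lam_mul_pEval_mul_pEval w (by rw [Finset.mem_range] at hj; omega), mul_ite, mul_one,
          mul_zero]
  simp only [VP, Phi, mul_sum]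
  rw [sum_comm, sum_congr rfl hcoeff, sum_ite_eq, if_pos (mem_range.2 (by omega)), mufilt,
    if_pos hi, one_mul]

theorem VP_eval_of_mem_span (hm : 0 < m) (hmn : m < n) {P : ℝ[X]}
    (hP : P ∈ Submodule.span ℝ (pPoly w '' Set.Iic (n - m))) (x : ℝ) :
    VP w n m (fun y => P.eval y) x = P.eval x := by
  induction hP using Submodule.span_induction with
  | mem _ hQ =>
    obtain ⟨i, hi, rfl⟩ := hQ
    exact VP_pEval hm hmn hi x
  | zero => simp [VP]
  | add P Q _ _ hP hQ =>
    rw [show (fun y => (P + Q).eval y) = (fun y => P.eval y) + fun y => Q.eval y from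
      funext fun y => eval_add, VP_add, hP, hQ, eval_add]
  | smul c P _ hP =>
    rw [show (fun y => (c • P).eval y) = c • fun y => P.eval y from
      funext fun y => eval_smul .., VP_smul, hP, eval_smul, smul_eq_mul]

end VP

/-- the VP operator reproduces all polynomials of degree at most `n−m`. -/
theorem stmt14 (w : ChebKind) (n m : ℕ) (hm : 0 < m) (hmn : m < n)
    (P : Polynomial ℝ) (hP : P.natDegree ≤ n - m) :
    ∀ x ∈ Set.Icc (-1 : ℝ) 1, VP w n m (fun y => P.eval y) x = P.eval x :=
  fun x _ => VP_eval_of_mem_span hm hmn (mem_span_pPoly w hP) x
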